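/- arXiv:2403.17493 — 2 statements merged into one kernel-verified Lean document; each statement's English description precedes it below -/
import Mathlib

section
/- Let T ⊆ ω^{<ω} be an ill-founded tree and fix an infinite branch f ∈ [T]. Then INF continuously reduces to a single E_T-equivalence class: the map y ↦ ⟨x, y⟩ (interleaving x and y), where x ∈ 2^ω is the characteristic function of the range of f made strictly increasing (so p_x = f when f is strictly increasing), satisfies y ∈ INF iff ⟨x, y⟩ E_T ⟨x, 1^∞⟩. Consequently the class [⟨x, 1^∞⟩]_{E_T} is not Σ⁰₂ and hence E_T is not Σ⁰₂. -/
def INF : Set (ℕ → Bool) := {x | ∀ n, ∃ m > n, x m = true}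

def IsSigma02 {α : Type*} [TopologicalSpace α] (S : Set α) : Prop :=
  ∃ C : ℕ → Set α, (∀ n, IsClosed (C n)) ∧ S = ⋃ n, C n

def evenPart (x : ℕ → Bool) : ℕ → Bool := fun n => x (2 * n)

def oddPart (x : ℕ → Bool) : ℕ → Bool := fun n => x (2 * n + 1)

def IsBranch (T : Set (List ℕ)) (f : ℕ → ℕ) : Prop :=
  ∀ n, List.ofFn (fun i : Fin n => f i) ∈ T

def PrincBranch (T : Set (List ℕ)) (x : ℕ → Bool) : Prop :=
  ∃ f : ℕ → ℕ, StrictMono f ∧ ({n | x n = true} = Set.range f) ∧ IsBranch T f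

def ET (T : Set (List ℕ)) (x y : ℕ → Bool) : Prop :=
  x = y ∨ (PrincBranch T (evenPart x) ∧ PrincBranch T (evenPart y) ∧
    oddPart x ∈ INF ∧ oddPart y ∈ INF)

/-- Interleaving `⟨x, y⟩`. -/
def interleave (x y : ℕ → Bool) : ℕ → Bool :=
  fun n => if n % 2 = 0 then x (n / 2) else y (n / 2)

lemma evenPart_interleave (a b : ℕ → Bool) : evenPart (interleave a b) = a := by
  funext n
  show (if 2 * n % 2 = 0 then a (2 * n / 2) else b (2 * n / 2)) = a n
  rw [if_pos (by omega)]
  congr 1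
  omega

lemma oddPart_interleave (a b : ℕ → Bool) : oddPart (interleave a b) = b := by
  funext n
  show (if (2 * n + 1) % 2 = 0 then a ((2 * n + 1) / 2) else b ((2 * n + 1) / 2)) = b n
  rw [if_neg (by omega)]
  congr 1
  omega

lemma one_mem_INF : (fun _ : ℕ => true) ∈ INF := fun n => ⟨n + 1, by omega, rfl⟩

/-- The complement of INF is dense: eventually-false sequences approximate anything. -/
lemma dense_compl_INF : Dense (INFᶜ) := by
  intro z
  have htend : Filter.Tendsto (fun k : ℕ => fun i => if i < k then z i else false)
      Filter.atTop (nhds z) := by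
    rw [tendsto_pi_nhds]
    intro i
    apply Filter.Tendsto.congr' (f₁ := fun _ => z i) _ tendsto_const_nhds
    filter_upwards [Filter.eventually_ge_atTop (i + 1)] with k hk
    simp [Nat.lt_of_lt_of_le (Nat.lt_succ_self i) hk]
  refine mem_closure_of_tendsto htend ?_
  filter_upwards with k
  intro hmem
  obtain ⟨m, hm, hmt⟩ := hmem k
  simp only [if_neg (by omega : ¬ m < k)] at hmt
  exact Bool.false_ne_true hmt

lemma INF_not_sigma02 : ¬ IsSigma02 INF := by
  rintro ⟨C, hC, hINF⟩
  -- INF is residual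
  have hU : ∀ n : ℕ, {x : ℕ → Bool | ∃ m > n, x m = true} ∈ residual (ℕ → Bool) := by
    intro n
    apply residual_of_dense_open
    · have : {x : ℕ → Bool | ∃ m > n, x m = true} =
        ⋃ m ∈ Set.Ioi n, (fun x : ℕ → Bool => x m) ⁻¹' {true} := by
        ext x; simp [Set.mem_Ioi]
      rw [this]
      exact isOpen_biUnion fun m _ =>
        (continuous_apply m).isOpen_preimage _ (isOpen_discrete _)
    · intro z
      have htend : Filter.Tendsto (fun k : ℕ => Function.update z k true)
          Filter.atTop (nhds z) := by
        rw [tendsto_pi_nhds]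
        intro i
        apply Filter.Tendsto.congr' (f₁ := fun _ => z i) _ tendsto_const_nhds
        filter_upwards [Filter.eventually_ge_atTop (i + 1)] with k hk
        exact (Function.update_of_ne (show i ≠ k by omega) true z).symm
      refine mem_closure_of_tendsto htend ?_
      filter_upwards [Filter.eventually_ge_atTop (n + 1)] with k hk
      exact ⟨k, by omega, Function.update_self k true z⟩
  have hINFres : INF ∈ residual (ℕ → Bool) := by
    have : INF = ⋂ n, {x : ℕ → Bool | ∃ m > n, x m = true} := by
      ext x; simp [INF]
    rw [this]
    exact (countable_iInter_mem.2 hU)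
  -- complement of each C n is residual
  have hCc : ∀ n, (C n)ᶜ ∈ residual (ℕ → Bool) := by
    intro n
    apply residual_of_dense_open ((hC n).isOpen_compl)
    refine Dense.mono ?_ dense_compl_INF
    rw [Set.compl_subset_compl, hINF]
    exact Set.subset_iUnion C n
  have hempty : (∅ : Set (ℕ → Bool)) ∈ residual (ℕ → Bool) := by
    have : INF ∩ ⋂ n, (C n)ᶜ = ∅ := by
      rw [← Set.compl_iUnion, ← hINF, Set.inter_compl_self]
    rw [← this]
    exact Filter.inter_mem hINFres (countable_iInter_mem.2 hCc)
  have : Dense (∅ : Set (ℕ → Bool)) := dense_of_mem_residual hempty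
  exact Set.not_nonempty_empty this.nonempty

lemma sigma02_preimage {α β : Type*} [TopologicalSpace α] [TopologicalSpace β]
    {g : α → β} (hg : Continuous g) {S : Set β} (hS : IsSigma02 S) :
    IsSigma02 (g ⁻¹' S) := by
  obtain ⟨C, hC, rfl⟩ := hS
  exact ⟨fun n => g ⁻¹' C n, fun n => (hC n).preimage hg, by rw [Set.preimage_iUnion]⟩

theorem ET_not_sigma02_of_illfounded (T : Set (List ℕ)) (f : ℕ → ℕ)
    (hf : StrictMono f) (hbr : IsBranch T f)
    (x : ℕ → Bool) (hx : {n | x n = true} = Set.range f) :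
    (∀ y : ℕ → Bool,
      y ∈ INF ↔ ET T (interleave x y) (interleave x (fun _ => true))) ∧
    ¬ IsSigma02 {z : ℕ → Bool | ET T z (interleave x (fun _ => true))} ∧
    ¬ IsSigma02 {p : (ℕ → Bool) × (ℕ → Bool) | ET T p.1 p.2} := by
  have hPB : PrincBranch T x := ⟨f, hf, hx, hbr⟩
  have hred : ∀ y : ℕ → Bool,
      y ∈ INF ↔ ET T (interleave x y) (interleave x (fun _ => true)) := by
    intro y
    constructor
    · intro hy
      right
      rw [evenPart_interleave, evenPart_interleave, oddPart_interleave, oddPart_interleave]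
      exact ⟨hPB, hPB, hy, one_mem_INF⟩
    · rintro (heq | ⟨_, _, hinf, _⟩)
      · have : y = fun _ => true := by
          rw [← oddPart_interleave x y, heq, oddPart_interleave]
        rw [this]
        exact one_mem_INF
      · rwa [oddPart_interleave] at hinf
  refine ⟨hred, ?_, ?_⟩
  · intro hsig
    apply INF_not_sigma02
    have hcont : Continuous (fun y : ℕ → Bool => interleave x y) := by
      apply continuous_pi
      intro n
      unfold interleave
      by_cases h : n % 2 = 0
      · simp only [h, if_pos]
        exact continuous_const
      · simp only [h, if_neg, if_false]
        exact continuous_apply (n / 2)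
    have := sigma02_preimage hcont hsig
    have heq : (fun y : ℕ → Bool => interleave x y) ⁻¹'
        {z : ℕ → Bool | ET T z (interleave x (fun _ => true))} = INF := by
      ext y
      exact (hred y).symm
    rwa [heq] at this
  · intro hsig
    have hcont : Continuous (fun z : ℕ → Bool =>
        (z, interleave x (fun _ => true))) := by
      exact continuous_id.prodMk continuous_const
    have := sigma02_preimage hcont hsig
    have heq : (fun z : ℕ → Bool => (z, interleave x (fun _ => true))) ⁻¹'
        {p : (ℕ → Bool) × (ℕ → Bool) | ET T p.1 p.2} =
        {z : ℕ → Bool | ET T z (interleave x (fun _ => true))} := rfl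
    rw [heq] at this
    -- reuse the previous argument
    apply INF_not_sigma02
    have hcont2 : Continuous (fun y : ℕ → Bool => interleave x y) := by
      apply continuous_pi
      intro n
      unfold interleave
      by_cases h : n % 2 = 0
      · simp only [h, if_pos]
        exact continuous_const
      · simp only [h, if_neg, if_false]
        exact continuous_apply (n / 2)
    have := sigma02_preimage hcont2 this
    have heq2 : (fun y : ℕ → Bool => interleave x y) ⁻¹'
        {z : ℕ → Bool | ET T z (interleave x (fun _ => true))} = INF := by
      ext y
      exact (hred y).symm
    rwa [heq2] at this
end

section
/- There is no sequence of Σ⁰₂ subsets (Sᵢ) of Cantor space with the following property for the structures A_∞, A₁, A₂, … (where A_n has R holding exactly on {0,…,n} and A_∞ has R holding on an infinite coinfinite set, structures identified with points of 2^ω): the isomorphism class of A_∞ is contained in S₀, the isomorphism class of A_n is contained in S_n, and Sᵢ ∩ Sⱼ = ∅ whenever the corresponding structures are non-isomorphic. -/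
def Iso (a b : ℕ → Bool) : Prop := ∃ σ : ℕ ≃ ℕ, ∀ n, a n = b (σ n)

/-- The sequence of structures `A_∞, A₁, A₂, …`:
`St 0 = A_∞` has `R` on the evens (infinite coinfinite), and for `n ≥ 1`,
`St n = A_n` has `R` holding exactly on `{0, …, n}`. -/
def St : ℕ → (ℕ → Bool)
  | 0 => fun n => decide (n % 2 = 0)
  | (n + 1) => fun m => decide (m ≤ n + 1)



open Classical in
lemma iso_of_equivs {a b : ℕ → Bool}
    (e : {n | a n = true} ≃ {n | b n = true})
    (e' : {n | ¬ a n = true} ≃ {n | ¬ b n = true}) : Iso a b := by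
  classical
  refine ⟨(Equiv.sumCompl (fun n => a n = true)).symm.trans
    ((Equiv.sumCongr e e').trans (Equiv.sumCompl (fun n => b n = true))), fun n => ?_⟩
  by_cases h : a n = true
  · have h1 : (Equiv.sumCompl (fun n => a n = true)).symm n = Sum.inl ⟨n, h⟩ := by
      rw [Equiv.symm_apply_eq, Equiv.sumCompl_apply_inl]
    simp only [Equiv.trans_apply, h1, Equiv.sumCongr_apply, Sum.map_inl,
      Equiv.sumCompl_apply_inl]
    have := (e ⟨n, h⟩).2
    simp only [Set.mem_setOf_eq] at this
    have h2 : (Equiv.sumCompl (fun n => b n = true)) ((e.sumCongr e') (Sum.inl ⟨n, h⟩))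
        = ↑(e ⟨n, h⟩) := rfl
    exact h.trans (h2 ▸ this).symm
  · have h1 : (Equiv.sumCompl (fun n => a n = true)).symm n = Sum.inr ⟨n, h⟩ := by
      rw [Equiv.symm_apply_eq, Equiv.sumCompl_apply_inr]
    simp only [Equiv.trans_apply, h1, Equiv.sumCongr_apply, Sum.map_inr,
      Equiv.sumCompl_apply_inr]
    have := (e' ⟨n, h⟩).2
    simp only [Set.mem_setOf_eq, Bool.not_eq_true] at this
    rw [Bool.not_eq_true] at h
    have h2 : (Equiv.sumCompl (fun n => b n = true)) ((e.sumCongr e') (Sum.inr ⟨n, ‹¬ a n = true›⟩))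
        = ↑(e' ⟨n, ‹¬ a n = true›⟩) := rfl
    exact h.trans (h2 ▸ this).symm

noncomputable def equivOfInf {s t : Set ℕ} (hs : s.Infinite) (ht : t.Infinite) : s ≃ t := by
  haveI := hs.to_subtype; haveI := ht.to_subtype
  haveI d1 : Denumerable s := (nonempty_denumerable _).some
  haveI d2 : Denumerable t := (nonempty_denumerable _).some
  exact (Denumerable.eqv s).trans (Denumerable.eqv t).symm

lemma iso_of_infinite {a b : ℕ → Bool}
    (ha : {n | a n = true}.Infinite) (ha' : {n | ¬ a n = true}.Infinite)
    (hb : {n | b n = true}.Infinite) (hb' : {n | ¬ b n = true}.Infinite) : Iso a b :=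
  iso_of_equivs (equivOfInf ha hb) (equivOfInf ha' hb')

lemma iso_of_finite {a b : ℕ → Bool}
    (ha : {n | a n = true}.Finite) (hb : {n | b n = true}.Finite)
    (hcard : {n | a n = true}.ncard = {n | b n = true}.ncard)
    (ha' : {n | ¬ a n = true}.Infinite) (hb' : {n | ¬ b n = true}.Infinite) : Iso a b := by
  have e : Nonempty ({n | a n = true} ≃ {n | b n = true}) := by
    haveI := ha.to_subtype; haveI := hb.to_subtype
    rw [← Finite.card_eq, Nat.card_coe_set_eq, Nat.card_coe_set_eq]
    exact hcard
  exact iso_of_equivs e.some (equivOfInf ha' hb')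



def Fx (x : ℕ → Bool) : ℕ → Bool := fun m =>
  if m % 2 = 0 then (if m / 2 < 2 then true else x (m / 2 - 2)) else false

lemma continuous_Fx : Continuous Fx := by
  apply continuous_pi
  intro m
  by_cases h : m % 2 = 0 <;> by_cases h2 : m / 2 < 2 <;>
    simp only [Fx, h, h2, if_true, if_false] <;>
    first
      | exact continuous_const
      | exact continuous_apply _

lemma St0_true : {n | St 0 n = true} = {m | m % 2 = 0} := by ext m; simp [St]
lemma St0_false : {n | ¬ St 0 n = true} = {m | ¬ m % 2 = 0} := by ext m; simp [St]
lemma Stn_true (n : ℕ) : {m | St (n+1) m = true} = Set.Iic (n+1) := by ext m; simp [St]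

lemma St0_true_inf : {n | St 0 n = true}.Infinite := by
  rw [St0_true]
  exact Set.infinite_of_injective_forall_mem (f := fun j => 2 * j)
    (fun a b h => by simpa using h) (fun j => by simp [Nat.mul_mod_right])

lemma St0_false_inf : {n | ¬ St 0 n = true}.Infinite := by
  rw [St0_false]
  exact Set.infinite_of_injective_forall_mem (f := fun j => 2 * j + 1)
    (fun a b h => by simpa using h) (fun j => by simp)

lemma Stn_true_ncard (n : ℕ) : {m | St (n+1) m = true}.ncard = n + 2 := by
  rw [Stn_true, ← Nat.card_coe_set_eq]
  simp

lemma Stn_false_inf (n : ℕ) : {m | ¬ St (n+1) m = true}.Infinite :=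
  Set.infinite_of_injective_forall_mem (f := fun j => j + n + 2)
    (fun a b h => by simpa using h) (fun j => by simp [St])

def Gset (x : ℕ → Bool) : Set ℕ := {j | j < 2 ∨ x (j - 2) = true}

lemma Gset_eq (x : ℕ → Bool) :
    Gset x = Set.Iio 2 ∪ (fun j => j + 2) '' {j | x j = true} := by
  ext j
  simp only [Gset, Set.mem_setOf_eq, Set.mem_union, Set.mem_Iio, Set.mem_image]
  constructor
  · rintro (h | h)
    · exact Or.inl h
    · by_cases hj : j < 2
      · exact Or.inl hj
      · exact Or.inr ⟨j - 2, h, by omega⟩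
  · rintro (h | ⟨i, hi, rfl⟩)
    · exact Or.inl h
    · right; simpa using hi

lemma Fx_true (x : ℕ → Bool) : {m | Fx x m = true} = (fun j => 2 * j) '' Gset x := by
  ext m
  simp only [Fx, Set.mem_setOf_eq, Set.mem_image, Gset]
  constructor
  · intro h
    by_cases h1 : m % 2 = 0
    · by_cases h2 : m / 2 < 2
      · exact ⟨m / 2, Or.inl h2, by omega⟩
      · simp only [h1, h2, if_true, if_false] at h
        exact ⟨m / 2, Or.inr h, by omega⟩
    · simp [h1] at h
  · rintro ⟨j, hj, rfl⟩
    have h1 : 2 * j % 2 = 0 := by omega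
    have h2 : 2 * j / 2 = j := by omega
    rcases hj with hj | hj
    · simp [h1, h2, hj]
    · by_cases h3 : j < 2 <;> simp [h1, h2, h3, hj]

lemma Fx_false_inf (x : ℕ → Bool) : {m | ¬ Fx x m = true}.Infinite :=
  Set.infinite_of_injective_forall_mem (f := fun j => 2 * j + 1)
    (fun a b h => by simpa using h) (fun j => by simp [Fx])

lemma Fx_true_inf {x : ℕ → Bool} (hx : {j | x j = true}.Infinite) :
    {m | Fx x m = true}.Infinite := by
  rw [Fx_true]
  apply Set.Infinite.image (fun a _ b _ h => by omega)
  rw [Gset_eq]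
  exact (hx.image (fun a _ b _ h => by omega)).mono Set.subset_union_right

lemma Fx_true_ncard {x : ℕ → Bool} (hx : {j | x j = true}.Finite) :
    {m | Fx x m = true}.ncard = {j | x j = true}.ncard + 2 := by
  rw [Fx_true, Set.ncard_image_of_injective _ (fun a b h => by simpa using h : Function.Injective (fun j => 2 * j)),
    Gset_eq, Set.ncard_union_eq _ (Set.finite_Iio 2) (hx.image _)]
  · rw [Set.ncard_image_of_injective _ (fun a b h => by simpa using h : Function.Injective (fun j => j + 2)),
      ← Nat.card_coe_set_eq (Set.Iio 2)]
    simp [Nat.add_comm]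
  · rw [Set.disjoint_left]
    rintro a ha ⟨i, hi, rfl⟩
    simp at ha

lemma Fx_true_finite {x : ℕ → Bool} (hx : {j | x j = true}.Finite) :
    {m | Fx x m = true}.Finite := by
  rw [Fx_true, Gset_eq]
  exact (((Set.finite_Iio 2).union (hx.image _)).image _)

lemma not_iso_St0 (n : ℕ) : ¬ Iso (St 0) (St (n + 1)) := by
  rintro ⟨σ, hσ⟩
  have : (Set.Iic (n+1)).Infinite := by
    apply Set.infinite_of_injective_forall_mem (f := fun j => σ (2 * j))
    · exact σ.injective.comp fun a b h => by omega
    · intro j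
      have h0 : St 0 (2 * j) = true := by simp [St]
      have := (hσ (2 * j)).symm.trans h0
      simpa [St] using this
  exact this (Set.finite_Iic _)

lemma exists_finite_mem_of_isOpen {U : Set (ℕ → Bool)} (hU : IsOpen U) {f : ℕ → Bool}
    (hf : f ∈ U) : ∃ z ∈ U, {j | z j = true}.Finite := by
  obtain ⟨I, u, hu, hpi⟩ := isOpen_pi_iff.mp hU f hf
  classical
  refine ⟨fun j => if j ∈ I then f j else false, hpi fun a ha => ?_, ?_⟩
  · show (if a ∈ I then f a else false) ∈ u a
    rw [if_pos (Finset.mem_coe.mp ha)]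
    exact (hu a ha).2
  · apply Set.Finite.subset I.finite_toSet
    intro j hj
    simp only [Set.mem_setOf_eq] at hj
    by_contra h
    rw [if_neg (fun hc => h (Finset.mem_coe.mpr hc))] at hj
    exact Bool.false_ne_true hj

lemma boolSeq_not_isOpen_singleton (f : ℕ → Bool) : ¬ IsOpen ({f} : Set (ℕ → Bool)) := by
  intro hU
  obtain ⟨I, u, hu, hpi⟩ := isOpen_pi_iff.mp hU f rfl
  obtain ⟨j0, hj0⟩ := Infinite.exists_notMem_finset I
  have hz : Function.update f j0 (!(f j0)) ∈ ({f} : Set (ℕ → Bool)) := by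
    apply hpi
    intro a ha
    rw [Function.update_of_ne (by rintro rfl; exact hj0 ha)]
    exact (hu a ha).2
  have : Function.update f j0 (!(f j0)) j0 = f j0 := by rw [Set.mem_singleton_iff.mp hz]
  rw [Function.update_self] at this
  exact (Bool.not_ne_self (f j0)) this

lemma inf_not_sigma02 :
    ¬ ∃ C : ℕ → Set (ℕ → Bool), (∀ n, IsClosed (C n)) ∧
      {x : ℕ → Bool | {j | x j = true}.Infinite} = ⋃ n, C n := by
  classical
  rintro ⟨C, hC, hEq⟩
  set D : ℕ ⊕ Finset ℕ → Set (ℕ → Bool) := fun i =>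
    Sum.elim C (fun F => {fun j => decide (j ∈ F)}) i with hD
  have hDc : ∀ i, IsClosed (D i) := by
    rintro (n | F)
    · exact hC n
    · exact isClosed_singleton
  have hDu : ⋃ i, D i = Set.univ := by
    rw [Set.eq_univ_iff_forall]
    intro x
    by_cases hx : {j | x j = true}.Infinite
    · have : x ∈ ⋃ n, C n := hEq ▸ hx
      obtain ⟨_, ⟨n, rfl⟩, hn⟩ := this
      exact Set.mem_iUnion.mpr ⟨Sum.inl n, hn⟩
    · rw [Set.not_infinite] at hx
      refine Set.mem_iUnion.mpr ⟨Sum.inr hx.toFinset, ?_⟩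
      simp only [hD, Sum.elim_inr, Set.mem_singleton_iff]
      funext j
      rcases hxj : x j with _ | _ <;> simp [Set.Finite.mem_toFinset, hxj]
  obtain ⟨i, y, hy⟩ := nonempty_interior_of_iUnion_of_closed hDc hDu
  rcases i with n | F
  · obtain ⟨z, hz, hzfin⟩ := exists_finite_mem_of_isOpen isOpen_interior hy
    have : z ∈ {x : ℕ → Bool | {j | x j = true}.Infinite} := by
      rw [hEq]
      exact Set.mem_iUnion.mpr ⟨n, interior_subset hz⟩
    exact this hzfin
  · have hsub : interior (D (Sum.inr F)) ⊆ {fun j => decide (j ∈ F)} := interior_subset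
    have hopen : IsOpen ({(fun j => decide (j ∈ F) : ℕ → Bool)} : Set (ℕ → Bool)) := by
      have : interior (D (Sum.inr F)) = {fun j => decide (j ∈ F)} := by
        apply le_antisymm hsub
        intro w hw
        rw [Set.mem_singleton_iff.mp hw]
        rw [Set.mem_singleton_iff.mp (hsub hy)] at hy
        exact hy
      rw [← this]
      exact isOpen_interior
    exact boolSeq_not_isOpen_singleton _ hopen

theorem no_sigma02_separation_of_iso_classes :
    ¬ ∃ S : ℕ → Set (ℕ → Bool),
      (∀ i, IsSigma02 (S i)) ∧
      (∀ i, {b | Iso (St i) b} ⊆ S i) ∧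
      (∀ i j, ¬ Iso (St i) (St j) → S i ∩ S j = ∅) := by
  rintro ⟨S, h1, h2, h3⟩
  have key : {x : ℕ → Bool | {j | x j = true}.Infinite} = Fx ⁻¹' (S 0) := by
    ext x
    simp only [Set.mem_setOf_eq, Set.mem_preimage]
    constructor
    · intro hx
      exact h2 0 (iso_of_infinite St0_true_inf St0_false_inf (Fx_true_inf hx) (Fx_false_inf x))
    · intro hx
      by_contra hinf
      rw [Set.not_infinite] at hinf
      set k := {j | x j = true}.ncard with hk
      have hiso : Iso (St (k + 1)) (Fx x) := by
        apply iso_of_finite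
        · rw [Stn_true]; exact Set.finite_Iic _
        · exact Fx_true_finite hinf
        · rw [Stn_true_ncard, Fx_true_ncard hinf]
        · exact Stn_false_inf k
        · exact Fx_false_inf x
      have hmem : Fx x ∈ S (k + 1) := h2 (k + 1) hiso
      have hd := h3 0 (k + 1) (not_iso_St0 k)
      exact Set.eq_empty_iff_forall_notMem.mp hd (Fx x) ⟨hx, hmem⟩
  obtain ⟨C, hC, hCeq⟩ := h1 0
  exact inf_not_sigma02 ⟨fun n => Fx ⁻¹' (C n), fun n => (hC n).preimage continuous_Fx,
    by rw [key, hCeq, Set.preimage_iUnion]⟩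
end
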